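/- Let n ∈ ℕ, let H̄ be an n×n real symmetric matrix all of whose eigenvalues are ≥ p for some p > 0, let t > 0, let q ≥ 0, and let ΔH̄ : ℝ → (n×n real matrices) be continuous on [0,t] with ‖ΔH̄(τ)‖_op ≤ q·p for all τ ∈ [0,t]. Then for every η₀ ∈ ℝⁿ, ∫₀ᵗ ‖ ∫₀ˢ exp(−(s−τ) H̄) ΔH̄(τ) exp(−τ H̄) η₀ dτ ‖ ds ≤ (q/p) ‖η₀‖. -/

import Mathlib

/-- The spectral norm (largest singular value) of a real matrix, i.e. the operator
norm of the induced map between Euclidean spaces. -/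
noncomputable def opNorm {ι κ : Type*} [Fintype ι] [Fintype κ] [DecidableEq κ]
    (A : Matrix ι κ ℝ) : ℝ :=
  ‖LinearMap.toContinuousLinearMap (Matrix.toEuclideanLin A)‖

/-!
Write `E(s) = exp(-s H̄)`. Since the spectrum of `H̄` lies in `[p, ∞)`, the functional calculus
gives `‖E(s)‖ ≤ e^{-ps}` for `s ≥ 0`, so the integrand of the inner integral has norm at most
`e^{-p(s-τ)} · qp · e^{-pτ} ‖η₀‖ = qp e^{-ps} ‖η₀‖`, and the inner integral at most
`qp s e^{-ps} ‖η₀‖`. Integrating, `∫₀ᵗ s e^{-ps} ds ≤ ∫₀^∞ s e^{-ps} ds = 1/p²`.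
-/

open Set MeasureTheory

section IsometricCFC

variable {A : Type*} [NormedRing A] [StarRing A] [NormedAlgebra ℝ A] [StarModule ℝ A]
  [IsometricContinuousFunctionalCalculus ℝ A IsSelfAdjoint] {a : A} {p : ℝ}

lemma IsSelfAdjoint.exp_neg_smul_eq_cfc (ha : IsSelfAdjoint a) (s : ℝ) :
    NormedSpace.exp (-(s • a)) = cfc (fun x => Real.exp (-(s * x))) a := by
  rw [cfc_comp' Real.exp (fun x => -(s * x)) a, cfc_neg, cfc_const_mul_id s a ha,
    CFC.real_exp_eq_normedSpace_exp]

lemma IsSelfAdjoint.norm_exp_neg_smul_le (ha : IsSelfAdjoint a)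
    (hp : ∀ x ∈ spectrum ℝ a, p ≤ x) {s : ℝ} (hs : 0 ≤ s) :
    ‖NormedSpace.exp (-(s • a))‖ ≤ Real.exp (-(p * s)) := by
  rw [ha.exp_neg_smul_eq_cfc]
  refine norm_cfc_le (Real.exp_pos _).le fun x hx => ?_
  rw [Real.norm_of_nonneg (Real.exp_pos _).le, Real.exp_le_exp]
  nlinarith [hp x hx]

lemma IsSelfAdjoint.norm_exp_neg_smul_mul_mul_exp_neg_smul_le (ha : IsSelfAdjoint a)
    (hp : ∀ x ∈ spectrum ℝ a, p ≤ x) {b : A} {C : ℝ} (hb : ‖b‖ ≤ C) {s τ : ℝ}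
    (hτ : 0 ≤ τ) (hτs : τ ≤ s) :
    ‖NormedSpace.exp (-((s - τ) • a)) * b * NormedSpace.exp (-(τ • a))‖
      ≤ C * Real.exp (-(p * s)) := by
  have hC : 0 ≤ C := (norm_nonneg b).trans hb
  calc _ ≤ ‖NormedSpace.exp (-((s - τ) • a))‖ * ‖b‖ * ‖NormedSpace.exp (-(τ • a))‖ :=
        norm_mul₃_le
    _ ≤ Real.exp (-(p * (s - τ))) * C * Real.exp (-(p * τ)) := by
        gcongr
        exacts [ha.norm_exp_neg_smul_le hp (sub_nonneg.2 hτs), ha.norm_exp_neg_smul_le hp hτ]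
    _ = C * Real.exp (-(p * s)) := by
        rw [mul_right_comm, ← Real.exp_add, mul_comm]
        ring_nf

end IsometricCFC

namespace Matrix

open scoped Matrix.Norms.L2Operator

lemma opNorm_eq_l2_opNorm {m n : Type*} [Fintype m] [Fintype n] [DecidableEq n]
    (A : Matrix m n ℝ) : opNorm A = ‖A‖ := rfl

lemma norm_toEuclideanLin_apply_le {m n : Type*} [Fintype m] [Fintype n] [DecidableEq n]
    (A : Matrix m n ℝ) (x : EuclideanSpace ℝ n) : ‖toEuclideanLin A x‖ ≤ ‖A‖ * ‖x‖ :=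
  l2_opNorm_mulVec A x

lemma IsHermitian.norm_toEuclideanLin_exp_mul_mul_exp_le {n : Type*} [Fintype n] [DecidableEq n]
    {H : Matrix n n ℝ} (hH : H.IsHermitian) {p : ℝ} (heig : ∀ i, p ≤ hH.eigenvalues i)
    {Δ : Matrix n n ℝ} {C : ℝ} (hΔ : opNorm Δ ≤ C) {s τ : ℝ} (hτ : 0 ≤ τ) (hτs : τ ≤ s)
    (x : EuclideanSpace ℝ n) :
    ‖toEuclideanLin (NormedSpace.exp (-((s - τ) • H)) * Δ * NormedSpace.exp (-(τ • H))) x‖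
      ≤ C * Real.exp (-(p * s)) * ‖x‖ := by
  have hspec : ∀ x ∈ spectrum ℝ H, p ≤ x := by
    rw [hH.spectrum_real_eq_range_eigenvalues]
    rintro - ⟨i, rfl⟩
    exact heig i
  refine (norm_toEuclideanLin_apply_le _ x).trans (mul_le_mul_of_nonneg_right ?_ (norm_nonneg x))
  exact IsSelfAdjoint.norm_exp_neg_smul_mul_mul_exp_neg_smul_le (a := H) hH.isSelfAdjoint hspec
    ((opNorm_eq_l2_opNorm Δ).symm.trans_le hΔ) hτ hτs

end Matrix

lemma integral_mul_exp_neg_mul {p : ℝ} (hp : p ≠ 0) (t : ℝ) :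
    ∫ s in (0 : ℝ)..t, s * Real.exp (-(p * s))
      = (1 - (p * t + 1) * Real.exp (-(p * t))) / p ^ 2 := by
  have hderiv : ∀ s, HasDerivAt (fun u => -((p * u + 1) / p ^ 2 * Real.exp (-(p * u))))
      (s * Real.exp (-(p * s))) s := fun s => by
    have hlin : HasDerivAt (fun u => (p * u + 1) / p ^ 2) (p / p ^ 2) s := by
      simpa using (((hasDerivAt_id s).const_mul p).add_const 1).div_const (p ^ 2)
    have hexp : HasDerivAt (fun u => Real.exp (-(p * u))) (Real.exp (-(p * s)) * -p) s := by
      simpa using ((hasDerivAt_id s).const_mul p).neg.exp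
    refine (hlin.mul hexp).neg.congr_deriv ?_
    field_simp
    ring
  rw [intervalIntegral.integral_eq_sub_of_hasDerivAt (fun s _ => hderiv s)
    (Continuous.intervalIntegrable (by fun_prop) _ _)]
  simp only [mul_zero, neg_zero, Real.exp_zero, zero_add, mul_one]
  ring

lemma integral_mul_exp_neg_mul_le {p t : ℝ} (hp : 0 < p) (ht : 0 ≤ t) :
    ∫ s in (0 : ℝ)..t, s * Real.exp (-(p * s)) ≤ 1 / p ^ 2 := by
  rw [integral_mul_exp_neg_mul hp.ne']
  gcongr
  exact sub_le_self _ (by positivity)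

lemma intervalIntegral.integral_norm_le_of_forall_mem_Ioc {E : Type*} [NormedAddCommGroup E]
    {f : ℝ → E} {g : ℝ → ℝ} {a b : ℝ} (hab : a ≤ b) (hg : IntervalIntegrable g volume a b)
    (h : ∀ x ∈ Ioc a b, ‖f x‖ ≤ g x) :
    ∫ x in a..b, ‖f x‖ ≤ ∫ x in a..b, g x := by
  rw [intervalIntegral.integral_of_le hab, intervalIntegral.integral_of_le hab]
  exact integral_mono_of_nonneg (.of_forall fun _ => norm_nonneg _) hg.1
    ((ae_restrict_iff' measurableSet_Ioc).2 (.of_forall h))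

theorem stmt3_general {n : ℕ} (H : Matrix (Fin n) (Fin n) ℝ) (hH : H.IsHermitian)
    (p : ℝ) (hp : 0 < p) (heig : ∀ i, p ≤ hH.eigenvalues i)
    (t : ℝ) (ht : 0 < t) (q : ℝ) (hq : 0 ≤ q)
    (ΔH : ℝ → Matrix (Fin n) (Fin n) ℝ)
    (hΔ : ∀ τ ∈ Set.Icc (0 : ℝ) t, opNorm (ΔH τ) ≤ q * p)
    (η₀ : EuclideanSpace ℝ (Fin n)) :
    ∫ s in (0 : ℝ)..t,
        ‖∫ τ in (0 : ℝ)..s,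
            Matrix.toEuclideanLin
              (NormedSpace.exp (-((s - τ) • H)) * ΔH τ * NormedSpace.exp (-(τ • H))) η₀‖
      ≤ (q / p) * ‖η₀‖ := by
  have hinner : ∀ s ∈ Ioc 0 t,
      ‖∫ τ in (0 : ℝ)..s,
          Matrix.toEuclideanLin
            (NormedSpace.exp (-((s - τ) • H)) * ΔH τ * NormedSpace.exp (-(τ • H))) η₀‖
        ≤ q * p * ‖η₀‖ * (s * Real.exp (-(p * s))) := by
    rintro s ⟨hs, hst⟩
    have hbound := intervalIntegral.norm_integral_le_of_norm_le_const
      (C := q * p * Real.exp (-(p * s)) * ‖η₀‖) fun τ hτ => by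
      rw [uIoc_of_le hs.le] at hτ
      exact hH.norm_toEuclideanLin_exp_mul_mul_exp_le heig
        (hΔ τ ⟨hτ.1.le, hτ.2.trans hst⟩) hτ.1.le hτ.2 η₀
    rw [sub_zero, abs_of_pos hs] at hbound
    linarith
  calc _ ≤ ∫ s in (0 : ℝ)..t, q * p * ‖η₀‖ * (s * Real.exp (-(p * s))) :=
        intervalIntegral.integral_norm_le_of_forall_mem_Ioc ht.le
          (Continuous.intervalIntegrable (by fun_prop) _ _) hinner
    _ = q * p * ‖η₀‖ * ∫ s in (0 : ℝ)..t, s * Real.exp (-(p * s)) :=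
        intervalIntegral.integral_const_mul _ _
    _ ≤ q * p * ‖η₀‖ * (1 / p ^ 2) := by
        gcongr
        exact integral_mul_exp_neg_mul_le hp ht.le
    _ = (q / p) * ‖η₀‖ := by
        field_simp

/-- Bound on the first Picard iterate from the proof of Lemma 1 of the supplement:
∫₀ᵗ ‖∫₀ˢ exp(−(s−τ)H̄) ΔH̄(τ) exp(−τH̄) η₀ dτ‖ ds ≤ (q/p) ‖η₀‖. -/
theorem stmt3 {n : ℕ} (H : Matrix (Fin n) (Fin n) ℝ) (hH : H.IsHermitian)
    (p : ℝ) (hp : 0 < p) (heig : ∀ i, p ≤ hH.eigenvalues i)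
    (t : ℝ) (ht : 0 < t) (q : ℝ) (hq : 0 ≤ q)
    (ΔH : ℝ → Matrix (Fin n) (Fin n) ℝ)
    (hΔcont : ContinuousOn ΔH (Set.Icc 0 t))
    (hΔ : ∀ τ ∈ Set.Icc (0 : ℝ) t, opNorm (ΔH τ) ≤ q * p)
    (η₀ : EuclideanSpace ℝ (Fin n)) :
    ∫ s in (0 : ℝ)..t,
        ‖∫ τ in (0 : ℝ)..s,
            Matrix.toEuclideanLin
              (NormedSpace.exp (-((s - τ) • H)) * ΔH τ * NormedSpace.exp (-(τ • H))) η₀‖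
      ≤ (q / p) * ‖η₀‖ :=
  stmt3_general H hH p hp heig t ht q hq ΔH hΔ η₀
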